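/- arXiv:1704.07188 — 2 statements merged into one kernel-verified Lean document; each statement's English description precedes it below -/
import Mathlib

section
/- For every μ > 0 and every positive integer k, the sum over all r ∈ ℕ^k (with ℕ = {1,2,...}) of the negative parts min(π²|r|² − μ, 0) is bounded below by −L_k^cl · μ^(1+k/2), where L_k^cl = (1 + k/2)^(-1) · ((1 + 2/k) K_k^cl)^(-k/2) and K_k^cl = (k/(k+2)) · 4π²/ω_k^(2/k), with ω_k the volume of the unit ball in ℝ^k. -/
/-!
The function `F x = (μ - π²|x|²)₊` does not increase when any `|xᵢ|` increases, so on the set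
`{x | ⌈|xᵢ|⌉ = rᵢ for all i}`, which has volume `2^k`, it dominates `F r`. These sets are disjoint
for distinct `r ∈ ℕ^k`, hence `2^k ∑_r F r ≤ ∫ F`. In polar coordinates the integral of the
truncated paraboloid is `∫ (R² - |x|²)₊ dx = 2 ω_k R^(k+2) / (k+2)`; with `R = √μ / π` this gives
exactly `2^k L_k^cl μ^(1+k/2)`.
-/

open MeasureTheory

/-- Volume of the unit ball in `ℝ^k`. -/
noncomputable def unitBallVol (k : ℕ) : ℝ :=
  (volume (Metric.ball (0 : EuclideanSpace ℝ (Fin k)) 1)).toReal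

/-- The semiclassical kinetic-energy constant `K_k^cl` (spin number `q = 1`). -/
noncomputable def Kcl (k : ℕ) : ℝ :=
  ((k : ℝ) / (k + 2)) * (4 * Real.pi ^ 2) / (unitBallVol k) ^ ((2 : ℝ) / k)

/-- The semiclassical eigenvalue-sum constant `L_k^cl`. -/
noncomputable def Lcl (k : ℕ) : ℝ :=
  (1 + (k : ℝ) / 2)⁻¹ * ((1 + (2 : ℝ) / k) * Kcl k) ^ (-(k : ℝ) / 2)

open Metric Set

lemma volume_setOf_natCeil_abs_eq {n : ℕ} (hn : n ≠ 0) :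
    volume {t : ℝ | ⌈|t|⌉₊ = n} = 2 := by
  have hshell : {t : ℝ | ⌈|t|⌉₊ = n} = closedBall 0 n \ closedBall 0 (n - 1 : ℝ) := by
    ext t
    simp [Nat.ceil_eq_iff hn, Nat.cast_pred (Nat.pos_of_ne_zero hn), and_comm]
  have hn1 : (1 : ℝ) ≤ n := Nat.one_le_cast.mpr (Nat.one_le_iff_ne_zero.mpr hn)
  rw [hshell, measure_sdiff (closedBall_subset_closedBall (by linarith))
      measurableSet_closedBall.nullMeasurableSet measure_closedBall_lt_top.ne,
    Real.volume_closedBall, Real.volume_closedBall, ← ENNReal.ofReal_sub _ (by linarith),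
    show (2 : ℝ) * n - 2 * (n - 1) = 2 by ring, ENNReal.ofReal_ofNat]

theorem two_pow_mul_tsum_pnat_le_integral {k : ℕ} {F : (Fin k → ℝ) → ℝ} (hF : Integrable F)
    (hF_nonneg : 0 ≤ F) (hF_anti : ∀ x y, (∀ i, |x i| ≤ |y i|) → F y ≤ F x) :
    2 ^ k * ∑' r : Fin k → ℕ+, F (fun i => r i) ≤ ∫ x, F x := by
  rw [← le_div_iff₀' (by positivity)]
  refine tsum_le_of_sum_le' (div_nonneg (integral_nonneg hF_nonneg) (by positivity)) fun s => ?_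
  rw [le_div_iff₀' (by positivity), Finset.mul_sum]
  let shell (r : Fin k → ℕ+) : Set (Fin k → ℝ) := univ.pi fun i => {t | ⌈|t|⌉₊ = r i}
  have hmeas (r) : MeasurableSet (shell r) :=
    .univ_pi fun i => measurableSet_eq_fun (by fun_prop) measurable_const
  have hvol (r) : volume (shell r) = 2 ^ k := by
    simp [shell, volume_pi_pi, volume_setOf_natCeil_abs_eq]
  have hdisj : PairwiseDisjoint (↑s) shell := fun r _ q _ hrq =>
    disjoint_left.mpr fun x hr hq => hrq <| funext fun i =>
      PNat.coe_injective <| (hr i (mem_univ i)).symm.trans (hq i (mem_univ i))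
  have hle (r) : ∀ x ∈ shell r, F (fun i => r i) ≤ F x := fun x hx =>
    hF_anti _ _ fun i => by
      rw [Nat.abs_cast, ← hx i (mem_univ i)]
      exact Nat.le_ceil _
  calc ∑ r ∈ s, 2 ^ k * F (fun i => r i)
      = ∑ r ∈ s, volume.real (shell r) • F (fun i => r i) := by simp [measureReal_def, hvol]
    _ ≤ ∑ r ∈ s, ∫ x in shell r, F x := Finset.sum_le_sum fun r _ =>
      setIntegral_ge_of_const_le (hmeas r) (by simp [hvol]) (hle r) hF.integrableOn
    _ = ∫ x in ⋃ r ∈ s, shell r, F x :=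
      (integral_biUnion_finset s (fun r _ => hmeas r) hdisj fun r _ => hF.integrableOn).symm
    _ ≤ ∫ x, F x := setIntegral_le_integral hF (.of_forall hF_nonneg)

lemma integral_Ioi_pow_mul_max_sq_sub_sq (n : ℕ) {R : ℝ} (hR : 0 ≤ R) :
    ∫ y in Ioi (0 : ℝ), y ^ n * max (R ^ 2 - y ^ 2) 0 = 2 * R ^ (n + 3) / ((n + 1) * (n + 3)) := by
  have hvanish : ∀ y ∈ Ioi (0 : ℝ) \ Ioc 0 R, y ^ n * max (R ^ 2 - y ^ 2) 0 = 0 := by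
    rintro y ⟨hy0, hyR⟩
    have hRy : R < y := lt_of_not_ge fun h => hyR ⟨hy0, h⟩
    rw [max_eq_right (by nlinarith), mul_zero]
  have hpoly : ∀ y ∈ Ioc (0 : ℝ) R,
      y ^ n * max (R ^ 2 - y ^ 2) 0 = R ^ 2 * y ^ n - y ^ (n + 2) := by
    rintro y ⟨hy0, hyR⟩
    rw [max_eq_left (by nlinarith)]
    ring
  rw [setIntegral_eq_of_subset_of_forall_sdiff_eq_zero measurableSet_Ioi Ioc_subset_Ioi_self
      hvanish, setIntegral_congr_fun measurableSet_Ioc hpoly, ← intervalIntegral.integral_of_le hR,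
    intervalIntegral.integral_sub ((intervalIntegral.intervalIntegrable_pow _).const_mul _)
      (intervalIntegral.intervalIntegrable_pow _),
    intervalIntegral.integral_const_mul, integral_pow, integral_pow]
  push_cast
  field_simp
  ring

lemma integrable_max_sq_sub_norm_sq {E : Type*} [SeminormedAddCommGroup E] [ProperSpace E]
    [MeasurableSpace E] [OpensMeasurableSpace E] (μ : Measure E) [IsFiniteMeasureOnCompacts μ]
    (R : ℝ) :
    Integrable (fun x => max (R ^ 2 - ‖x‖ ^ 2) 0) μ := by
  refine Continuous.integrable_of_hasCompactSupport (by fun_prop)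
    (HasCompactSupport.intro (isCompact_closedBall 0 |R|) fun x hx => max_eq_right ?_)
  rw [mem_closedBall_zero_iff, not_le] at hx
  nlinarith [sq_abs R, abs_nonneg R]

theorem integral_max_sq_sub_norm_sq {E : Type*} [NormedAddCommGroup E] [NormedSpace ℝ E]
    [FiniteDimensional ℝ E] [Nontrivial E] [MeasurableSpace E] [BorelSpace E] (μ : Measure E)
    [μ.IsAddHaarMeasure]
    {R : ℝ} (hR : 0 ≤ R) :
    ∫ x, max (R ^ 2 - ‖x‖ ^ 2) 0 ∂μ =
      2 / (Module.finrank ℝ E + 2) * μ.real (ball 0 1) * R ^ (Module.finrank ℝ E + 2) := by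
  obtain ⟨n, hn⟩ : ∃ n, Module.finrank ℝ E = n + 1 :=
    Nat.exists_eq_add_one.mpr Module.finrank_pos
  rw [integral_fun_norm_addHaar μ fun t => max (R ^ 2 - t ^ 2) 0, hn, Nat.add_sub_cancel]
  simp only [smul_eq_mul, nsmul_eq_mul, integral_Ioi_pow_mul_max_sq_sub_sq n hR]
  push_cast
  field_simp
  ring

lemma Lcl_eq {k : ℕ} (hk : k ≠ 0) :
    Lcl k = 2 / (k + 2) * unitBallVol k / (2 * Real.pi) ^ k := by
  have hω : 0 < unitBallVol k :=
    ENNReal.toReal_pos (measure_ball_pos volume 0 one_pos).ne' measure_ball_lt_top.ne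
  have hK : (1 + 2 / k : ℝ) * Kcl k = (2 * Real.pi) ^ (2 : ℝ) / unitBallVol k ^ (2 / k : ℝ) := by
    rw [Kcl, Real.rpow_two]
    field_simp
    ring
  rw [Lcl, hK, Real.div_rpow (by positivity) (by positivity), ← Real.rpow_mul (by positivity),
    ← Real.rpow_mul hω.le, show (2 : ℝ) * (-k / 2) = -k by ring,
    show (2 / k : ℝ) * (-k / 2) = -1 by field_simp, Real.rpow_neg (by positivity),
    Real.rpow_natCast, Real.rpow_neg_one]
  field_simp
  ring

lemma max_sub_pi_sq_mul_sum_sq_eq {k : ℕ} {μ : ℝ} (hμ : 0 ≤ μ) (x : Fin k → ℝ) :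
    max (μ - Real.pi ^ 2 * ∑ i, x i ^ 2) 0 =
      Real.pi ^ 2 * max ((√μ / Real.pi) ^ 2 - ‖WithLp.toLp 2 x‖ ^ 2) 0 := by
  have hμ_eq : Real.pi ^ 2 * (√μ / Real.pi) ^ 2 = μ := by
    rw [div_pow, Real.sq_sqrt hμ]
    field_simp
  rw [EuclideanSpace.real_norm_sq_eq, mul_max_of_nonneg _ _ (sq_nonneg Real.pi), mul_zero,
    mul_sub, hμ_eq]

lemma integrable_max_sub_pi_sq_mul_sum_sq (k : ℕ) {μ : ℝ} (hμ : 0 ≤ μ) :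
    Integrable fun x : Fin k → ℝ => max (μ - Real.pi ^ 2 * ∑ i, x i ^ 2) 0 := by
  simp only [max_sub_pi_sq_mul_sum_sq_eq hμ]
  exact ((PiLp.volume_preserving_toLp (Fin k)).integrable_comp_of_integrable
    (integrable_max_sq_sub_norm_sq volume _)).const_mul _

theorem integral_max_sub_pi_sq_mul_sum_sq {k : ℕ} (hk : k ≠ 0) {μ : ℝ} (hμ : 0 ≤ μ) :
    ∫ x : Fin k → ℝ, max (μ - Real.pi ^ 2 * ∑ i, x i ^ 2) 0 =
      2 ^ k * Lcl k * μ ^ (1 + (k : ℝ) / 2) := by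
  have : Nonempty (Fin k) := ⟨⟨0, Nat.pos_of_ne_zero hk⟩⟩
  have hpow : μ ^ (1 + (k : ℝ) / 2) = √μ ^ (k + 2) := by
    rw [Real.sqrt_eq_rpow, ← Real.rpow_natCast, ← Real.rpow_mul hμ]
    push_cast
    ring_nf
  simp only [max_sub_pi_sq_mul_sum_sq_eq hμ]
  rw [integral_const_mul, (PiLp.volume_preserving_toLp (Fin k)).integral_comp
      (MeasurableEquiv.toLp 2 _).measurableEmbedding fun y => max (_ - ‖y‖ ^ 2) 0,
    integral_max_sq_sub_norm_sq volume (by positivity), finrank_euclideanSpace_fin, Lcl_eq hk,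
    hpow, div_pow, mul_pow]
  field_simp
  rw [unitBallVol, measureReal_def]
  ring

/-- Berezin–Li–Yau: the sum of the negative parts of the Dirichlet eigenvalues
`π²|r|² - μ`, `r ∈ ℕ^k` (`ℕ = {1,2,...}`), is bounded below by `-L_k^cl μ^{1+k/2}`. -/
theorem berezin_li_yau (k : ℕ) (hk : 1 ≤ k) (μ : ℝ) (hμ : 0 < μ) :
    -(Lcl k) * μ ^ (1 + (k : ℝ) / 2) ≤
      ∑' r : Fin k → ℕ+, min (Real.pi ^ 2 * ∑ i, ((r i : ℝ)) ^ 2 - μ) 0 := by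
  let F (x : Fin k → ℝ) : ℝ := max (μ - Real.pi ^ 2 * ∑ i, x i ^ 2) 0
  have hF_anti (x y : Fin k → ℝ) (hxy : ∀ i, |x i| ≤ |y i|) : F y ≤ F x := by
    have : ∑ i, x i ^ 2 ≤ ∑ i, y i ^ 2 := Finset.sum_le_sum fun i _ => sq_le_sq.mpr (hxy i)
    exact max_le_max_right 0 (by nlinarith [sq_nonneg Real.pi])
  have hmin (r : Fin k → ℕ+) :
      min (Real.pi ^ 2 * ∑ i, ((r i : ℝ)) ^ 2 - μ) 0 = -F (fun i => r i) := by
    rw [← neg_sub, ← neg_zero, min_neg_neg]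
  rw [tsum_congr hmin, tsum_neg, neg_mul, neg_le_neg_iff,
    ← mul_le_mul_iff_of_pos_left (pow_pos two_pos k), ← mul_assoc,
    ← integral_max_sub_pi_sq_mul_sum_sq (by omega) hμ.le]
  exact two_pow_mul_tsum_pnat_le_integral (integrable_max_sub_pi_sq_mul_sum_sq k hμ.le)
    (fun _ => le_max_right _ _) hF_anti
end

section
/- Let Λ > 0 and let {Q} be a finite collection of disjoint cubes partitioned into groups, where in each group the cube volumes are of the form m·2^{dk}, k ≥ 0 (m the minimal volume in the group), with at most 2^d cubes of each volume, and ∫_Q f ≤ Λ for all cubes, and in each group some cube of minimal volume m satisfies |Q|^{-2/d}(∫_Q f)^{1+2/d} ≥ m^{-2/d}(Λ/2^d)^{1+2/d}. Then with C = 4^{d+2}/3, one has ∑_Q |Q|^{-2/d}[C Λ^{-1/d}(∫_Q f)^{1+2/d} − (∫_Q f)^{1+1/d}] ≥ 0. -/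
open MeasureTheory

/-- An axis-parallel cube in `ℝ^d` with lower corner `a` and side length `ℓ`. -/
def cube (d : ℕ) (a : EuclideanSpace ℝ (Fin d)) (ℓ : ℝ) : Set (EuclideanSpace ℝ (Fin d)) :=
  {x | ∀ i, a i ≤ x i ∧ x i ≤ a i + ℓ}

lemma sum_quarter_le (T : Finset ℕ) : ∑ k ∈ T, (1/4 : ℝ) ^ k ≤ 4/3 := by
  have h := Summable.sum_le_tsum T (fun k _ => by positivity)
    (summable_geometric_of_lt_one (by norm_num) (by norm_num : (1/4:ℝ) < 1))
  rw [tsum_geometric_of_lt_one (by norm_num) (by norm_num)] at h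
  norm_num at h
  linarith

lemma weight_eq (d : ℕ) (hd : 1 ≤ d) (m : ℝ) (hm : 0 < m) (k : ℕ) :
    (m * 2 ^ (d * k)) ^ (-(2 : ℝ) / d) = m ^ (-(2 : ℝ) / d) * (1/4 : ℝ) ^ k := by
  have hd0 : (d:ℝ) ≠ 0 := Nat.cast_ne_zero.mpr (by omega)
  rw [Real.mul_rpow hm.le (by positivity)]
  congr 1
  rw [← Real.rpow_natCast 2 (d*k), ← Real.rpow_mul (by norm_num)]
  have h1 : ((d * k : ℕ) : ℝ) * (-(2:ℝ)/d) = -(2*k : ℕ) := by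
    push_cast; field_simp
  rw [h1, Real.rpow_neg (by norm_num), Real.rpow_natCast]
  rw [show ((1:ℝ)/4) = (2^2 : ℝ)⁻¹ by norm_num, ← inv_pow, pow_mul]; norm_num

lemma pow_exp_eq (d : ℕ) (hd : 1 ≤ d) :
    ((2:ℝ)^d) ^ (1 + (2:ℝ)/d) = 2^d * 4 := by
  have hd0 : (d:ℝ) ≠ 0 := Nat.cast_ne_zero.mpr (by omega)
  rw [← Real.rpow_natCast 2 d, ← Real.rpow_mul (by norm_num)]
  have : (d:ℝ) * (1 + (2:ℝ)/d) = (d:ℝ) + 2 := by field_simp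
  rw [this, Real.rpow_add (by norm_num), Real.rpow_natCast]
  norm_num

/-- Group comparison estimate: for a collection of disjoint cubes organised in groups
as produced by the stopping-time construction, with `C = 4^{d+2}/3`,
`∑_Q |Q|^{-2/d} [C Λ^{-1/d} (∫_Q f)^{1+2/d} - (∫_Q f)^{1+1/d}] ≥ 0`. -/
theorem group_comparison (d : ℕ) (hd : 1 ≤ d)
    (f : EuclideanSpace ℝ (Fin d) → ℝ) (hf : ∀ x, 0 ≤ f x) (hint : Integrable f)
    (Λ : ℝ) (hΛ : 0 < Λ)
    (n : ℕ) (a : Fin n → EuclideanSpace ℝ (Fin d)) (ℓ : Fin n → ℝ) (G : Fin n → ℕ)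
    (hℓ : ∀ i, 0 < ℓ i)
    (hdisj : ∀ i j, i ≠ j → Disjoint (cube d (a i) (ℓ i)) (cube d (a j) (ℓ j)))
    (hsmall : ∀ i, ∫ x in cube d (a i) (ℓ i), f x ≤ Λ)
    (hgroups : ∀ g ∈ Set.range G, ∃ m : ℝ, 0 < m ∧
      (∀ i, G i = g → ∃ k : ℕ, (ℓ i) ^ d = m * 2 ^ (d * k)) ∧
      (∀ v : ℝ, {i : Fin n | G i = g ∧ (ℓ i) ^ d = v}.ncard ≤ 2 ^ d) ∧
      (∃ i, G i = g ∧ (ℓ i) ^ d = m ∧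
        m ^ (-(2 : ℝ) / d) * (Λ / 2 ^ d) ^ (1 + (2 : ℝ) / d) ≤
          ((ℓ i) ^ d) ^ (-(2 : ℝ) / d) *
            (∫ x in cube d (a i) (ℓ i), f x) ^ (1 + (2 : ℝ) / d))) :
    0 ≤ ∑ i : Fin n, ((ℓ i) ^ d) ^ (-(2 : ℝ) / d) *
        ((4 : ℝ) ^ (d + 2) / 3 * Λ ^ (-(1 : ℝ) / d) *
            (∫ x in cube d (a i) (ℓ i), f x) ^ (1 + (2 : ℝ) / d) -
          (∫ x in cube d (a i) (ℓ i), f x) ^ (1 + (1 : ℝ) / d)) := by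
  classical
  have hd0 : (d:ℝ) ≠ 0 := Nat.cast_ne_zero.mpr (by omega)
  set F : Fin n → ℝ := fun i => ∫ x in cube d (a i) (ℓ i), f x with hFdef
  have hF0 : ∀ i, 0 ≤ F i := fun i => integral_nonneg fun x => hf x
  set p : ℝ := 1 + (2:ℝ)/d with hpdef
  set q : ℝ := 1 + (1:ℝ)/d with hqdef
  set C : ℝ := (4:ℝ)^(d+2)/3 with hCdef
  set w : Fin n → ℝ := fun i => ((ℓ i)^d) ^ (-(2:ℝ)/d) with hwdef
  have hw0 : ∀ i, 0 ≤ w i := fun i => Real.rpow_nonneg (pow_pos (hℓ i) d).le _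
  set t : Fin n → ℝ := fun i => w i * (C * Λ ^ (-(1:ℝ)/d) * F i ^ p - F i ^ q) with htdef
  show 0 ≤ ∑ i, t i
  rw [← Finset.sum_fiberwise_of_maps_to (g := G) (t := Finset.univ.image G)
      (fun i _ => Finset.mem_image_of_mem G (Finset.mem_univ i))]
  apply Finset.sum_nonneg
  intro g hg
  obtain ⟨j, _, hjg⟩ := Finset.mem_image.mp hg
  obtain ⟨m, hm, hvol, hcount, i₀, hg₀, hv₀, hmain⟩ := hgroups g ⟨j, hjg⟩
  set S : Finset (Fin n) := Finset.univ.filter (fun i => G i = g) with hSdef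
  -- choose exponents
  set K : Fin n → ℕ := fun i => if h : G i = g then (hvol i h).choose else 0 with hKdef
  have hK : ∀ i ∈ S, (ℓ i)^d = m * 2^(d * K i) := by
    intro i hi
    have h : G i = g := (Finset.mem_filter.mp hi).2
    simp only [hKdef, dif_pos h]
    exact (hvol i h).choose_spec
  have hwK : ∀ i ∈ S, w i = m ^ (-(2:ℝ)/d) * (1/4:ℝ) ^ (K i) := by
    intro i hi
    rw [hwdef]; simp only
    rw [hK i hi, weight_eq d hd m hm]
  -- the geometric count bound
  have hsum14 : ∑ i ∈ S, ((1:ℝ)/4) ^ (K i) ≤ 2^d * (4/3) := by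
    rw [Finset.sum_comp ((1/4:ℝ) ^ ·) K]
    have step1 : ∀ k ∈ S.image K, ((S.filter (fun i => K i = k)).card : ℝ) ≤ 2^d := by
      intro k _
      have hsub : ↑(S.filter (fun i => K i = k)) ⊆
          {i : Fin n | G i = g ∧ (ℓ i)^d = m * 2^(d*k)} := by
        intro i hi
        simp only [Finset.coe_filter, Set.mem_setOf_eq] at hi
        obtain ⟨hiS, hik⟩ := hi
        refine ⟨(Finset.mem_filter.mp hiS).2, ?_⟩
        rw [hK i hiS, hik]
      have h1 := (Set.ncard_le_ncard hsub (Set.toFinite _)).trans (hcount (m * 2^(d*k)))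
      rw [Set.ncard_coe_finset] at h1
      exact_mod_cast h1
    calc ∑ k ∈ S.image K, (S.filter (fun i => K i = k)).card • ((1/4:ℝ)) ^ k
        ≤ ∑ k ∈ S.image K, (2^d : ℝ) * (1/4) ^ k := by
          apply Finset.sum_le_sum
          intro k hk
          rw [nsmul_eq_mul]
          exact mul_le_mul_of_nonneg_right (step1 k hk) (by positivity)
      _ = 2^d * ∑ k ∈ S.image K, (1/4:ℝ) ^ k := by rw [Finset.mul_sum]
      _ ≤ 2^d * (4/3) := by
          exact mul_le_mul_of_nonneg_left (sum_quarter_le _) (by positivity)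
  -- negative part bound
  have hneg : ∑ i ∈ S, w i * F i ^ q ≤ m ^ (-(2:ℝ)/d) * (2^d * (4/3)) * Λ ^ q := by
    calc ∑ i ∈ S, w i * F i ^ q
        ≤ ∑ i ∈ S, (m ^ (-(2:ℝ)/d) * (1/4:ℝ) ^ (K i)) * Λ ^ q := by
          apply Finset.sum_le_sum
          intro i hi
          rw [hwK i hi]
          exact mul_le_mul_of_nonneg_left
            (Real.rpow_le_rpow (hF0 i) (hsmall i) (by positivity)) (by positivity)
      _ = m ^ (-(2:ℝ)/d) * Λ ^ q * ∑ i ∈ S, ((1:ℝ)/4) ^ (K i) := by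
          rw [Finset.mul_sum]; apply Finset.sum_congr rfl; intro i _; ring
      _ ≤ m ^ (-(2:ℝ)/d) * Λ ^ q * (2^d * (4/3)) := by
          apply mul_le_mul_of_nonneg_left hsum14 (by positivity)
      _ = m ^ (-(2:ℝ)/d) * (2^d * (4/3)) * Λ ^ q := by ring
  -- positive part bound
  have hi₀S : i₀ ∈ S := Finset.mem_filter.mpr ⟨Finset.mem_univ _, hg₀⟩
  have hpos : C * Λ ^ (-(1:ℝ)/d) * (m ^ (-(2:ℝ)/d) * (Λ / 2^d) ^ p) ≤
      ∑ i ∈ S, w i * (C * Λ ^ (-(1:ℝ)/d) * F i ^ p) := by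
    have hterm : C * Λ ^ (-(1:ℝ)/d) * (m ^ (-(2:ℝ)/d) * (Λ / 2^d) ^ p) ≤
        w i₀ * (C * Λ ^ (-(1:ℝ)/d) * F i₀ ^ p) := by
      have hc : (0:ℝ) ≤ C * Λ ^ (-(1:ℝ)/d) := by positivity
      have h2 := mul_le_mul_of_nonneg_left hmain hc
      calc C * Λ ^ (-(1:ℝ)/d) * (m ^ (-(2:ℝ)/d) * (Λ / 2^d) ^ p) ≤
          C * Λ ^ (-(1:ℝ)/d) * (((ℓ i₀)^d) ^ (-(2:ℝ)/d) * F i₀ ^ p) := h2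
        _ = w i₀ * (C * Λ ^ (-(1:ℝ)/d) * F i₀ ^ p) := by rw [hwdef]; ring
    refine hterm.trans (Finset.single_le_sum (f := fun i => w i * (C * Λ ^ (-(1:ℝ)/d) * F i ^ p))
      (fun i _ => ?_) hi₀S)
    exact mul_nonneg (hw0 i) (mul_nonneg (by positivity) (Real.rpow_nonneg (hF0 i) _))
  -- key arithmetic identity
  have hΛcomb : Λ ^ (-(1:ℝ)/d) * Λ ^ p = Λ ^ q := by
    rw [← Real.rpow_add hΛ]
    congr 1
    rw [hpdef, hqdef]; field_simp; ring
  have hdiv : (Λ / 2^d) ^ p = Λ ^ p / (2^d * 4) := by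
    rw [Real.div_rpow hΛ.le (by positivity), hpdef, pow_exp_eq d hd]
  have h4 : C = 16 * ((2:ℝ)^d)^2 / 3 := by
    rw [hCdef, pow_add, show (4:ℝ)^d = ((2:ℝ)^d)^2 by
      rw [show (4:ℝ) = 2^2 by norm_num, ← pow_mul, ← pow_mul, mul_comm]]
    ring
  have key : m ^ (-(2:ℝ)/d) * (2^d * (4/3)) * Λ ^ q ≤
      C * Λ ^ (-(1:ℝ)/d) * (m ^ (-(2:ℝ)/d) * (Λ / 2^d) ^ p) := by
    apply le_of_eq
    rw [hdiv, ← hΛcomb, h4]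
    have h2d : (0:ℝ) < 2^d := by positivity
    field_simp
    ring
  -- conclude
  have hsplit : ∑ i ∈ S, t i =
      (∑ i ∈ S, w i * (C * Λ ^ (-(1:ℝ)/d) * F i ^ p)) - ∑ i ∈ S, w i * F i ^ q := by
    rw [← Finset.sum_sub_distrib]
    apply Finset.sum_congr rfl
    intro i _
    rw [htdef]; ring
  rw [hsplit]
  linarith
end
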